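/- Let τ⋄ := inf{t : ∀v∈G, τ_H(v) ≤ L_v(t)}, where τ_H is a strong stationary time for Q and the τ_H(v) are conditionally independent copies on the lamp graphs given the local times, and let τ_G(x) be a strong stationary time for the lazy walk on G started from x. Define τ⋄₂ := τ⋄ + τ_G(X_{τ⋄}), where after time τ⋄ the chain is restarted from (F_{τ⋄}, X_{τ⋄}) and run independently of the past. Then τ⋄₂ is a strong stationary time for the generalized lamplighter chain on H≀G, i.e. P_{(f₀,x₀)}[X⋄_t = (f,x), τ⋄₂ = t] = π_G(x)·(∏_{v∈G} π_H(f_v))·P_{(f₀,x₀)}[τ⋄₂ = t]. -/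

import Mathlib

/-!
At time `τ⋄` every lamp `v` has been refreshed `L_v(τ⋄) ≥ τ_H(v)` times, where `τ_H(v)` is a
strong stationary time of its own; as these are independent given the base path, the lamps
are then independent and `π_H`-distributed, independently of `(τ⋄, X_{τ⋄})`. After the restart,
the lamps stay `∏ π_H`-distributed whatever the base walk does, because `π_H` is
`Q`-stationary, while the base walk is stopped at its own strong stationary time `τ_G`, which
makes its position `π_G`-distributed independently of the stopping time. Hence at `τ⋄₂` the
chain has law `π_G ⊗ ∏ π_H`, independently of `τ⋄₂`.
-/

open Finset

noncomputable section

open scoped Classical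

section MarkovDefs

variable {V : Type*} [Fintype V] [DecidableEq V] [Nonempty V]
variable {W : Type*} [Fintype W] [DecidableEq W] [Nonempty W]

/-- `P` is a stochastic (transition) matrix. -/
def IsTransitionMatrix (P : Matrix V V ℝ) : Prop :=
  (∀ x y, 0 ≤ P x y) ∧ ∀ x, ∑ y, P x y = 1

/-- `π` is a (positive) stationary distribution for `P`. -/
def IsStationaryDist (P : Matrix V V ℝ) (π : V → ℝ) : Prop :=
  (∀ x, 0 < π x) ∧ (∑ x, π x = 1) ∧ ∀ y, ∑ x, π x * P x y = π y

/-- Reversibility (detailed balance) of `P` with respect to `π`. -/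
def IsReversibleMC (P : Matrix V V ℝ) (π : V → ℝ) : Prop :=
  ∀ x y, π x * P x y = π y * P y x

/-- Irreducibility of the chain `P`. -/
def IsIrreducibleMC (P : Matrix V V ℝ) : Prop :=
  ∀ x y, ∃ t : ℕ, 0 < (P ^ t) x y

/-- Aperiodicity of the chain `P`. -/
def IsAperiodicMC (P : Matrix V V ℝ) : Prop :=
  ∀ x : V, ∃ N : ℕ, ∀ n, N ≤ n → 0 < (P ^ n) x x

/-- The chain `P` is lazy. -/
def IsLazyMC (P : Matrix V V ℝ) : Prop := ∀ x, (1:ℝ)/2 ≤ P x x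

/-- The uniform distribution on a finite type. -/
def unifDist (α : Type*) [Fintype α] : α → ℝ := fun _ => (Fintype.card α : ℝ)⁻¹

/-- The second largest eigenvalue of a transition matrix: the supremum of the
eigenvalues different from `1`. -/
def secondEigenvalue (P : Matrix V V ℝ) : ℝ :=
  sSup {r : ℝ | r ≠ 1 ∧ ∃ φ : V → ℝ, φ ≠ 0 ∧ P.mulVec φ = r • φ}

/-- Relaxation time `1/(1-λ₂)`. -/
def relaxationTime (P : Matrix V V ℝ) : ℝ := 1 / (1 - secondEigenvalue P)

/-- Worst-case total variation distance from stationarity at time `t`. -/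
def tvFromStat (P : Matrix V V ℝ) (π : V → ℝ) (t : ℕ) : ℝ :=
  ⨆ x : V, (1/2) * ∑ y, |(P ^ t) x y - π y|

/-- The `ε`-mixing time (in total variation). -/
def mixingTime (P : Matrix V V ℝ) (π : V → ℝ) (ε : ℝ) : ℕ :=
  sInf {t : ℕ | tvFromStat P π t ≤ ε}

/-- Separation distance from initial state `x` at time `t`. -/
def sepDist (P : Matrix V V ℝ) (π : V → ℝ) (x : V) (t : ℕ) : ℝ :=
  ⨆ y : V, (1 - (P ^ t) x y / π y)

/-- Probability that the chain started at `x₀` follows the path `p`. -/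
def pathWeight (P : Matrix V V ℝ) (x₀ : V) {t : ℕ} (p : Fin (t+1) → V) : ℝ :=
  (if p 0 = x₀ then (1:ℝ) else 0) * ∏ i : Fin t, P (p i.castSucc) (p i.succ)

/-- `P_x[τ_y > t]`: the walk started at `x` avoids `y` up to time `t`. -/
def hitGT (P : Matrix V V ℝ) (x y : V) (t : ℕ) : ℝ :=
  ∑ p : Fin (t+1) → V, if ∀ i, p i ≠ y then pathWeight P x p else 0

/-- Expected hitting time `E_x[τ_y]`. -/
def expHit (P : Matrix V V ℝ) (x y : V) : ℝ := ∑' t : ℕ, hitGT P x y t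

/-- Maximal expected hitting time `t_hit`. -/
def maxHitTime (P : Matrix V V ℝ) : ℝ := ⨆ x : V, ⨆ y : V, expHit P x y

/-- `P_x[τ_cov > t]`: the walk started at `x` has not visited every state by time `t`. -/
def coverGT (P : Matrix V V ℝ) (x : V) (t : ℕ) : ℝ :=
  ∑ p : Fin (t+1) → V, if Function.Surjective p then 0 else pathWeight P x p

/-- Expected cover time `E_x[τ_cov]`. -/
def expCover (P : Matrix V V ℝ) (x : V) : ℝ := ∑' t : ℕ, coverGT P x t

/-- The cover time `t_cov`. -/
def coverTime (P : Matrix V V ℝ) : ℝ := ⨆ x : V, expCover P x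

/-- `P_w[R(w) > t]`: tail of the first return time to `w`. -/
def returnGT (P : Matrix V V ℝ) (w : V) (t : ℕ) : ℝ :=
  ∑ p : Fin (t+1) → V, if ∀ i, i ≠ 0 → p i ≠ w then pathWeight P w p else 0

/-- The degree of a vertex. -/
def graphDeg (G : SimpleGraph V) (x : V) : ℕ := (univ.filter fun y => G.Adj x y).card

/-- `G` is a regular graph. -/
def IsRegularGraph (G : SimpleGraph V) : Prop := ∃ d, ∀ x, graphDeg G x = d

/-- The lazy simple random walk on `G`. -/
def lazySRW (G : SimpleGraph V) : Matrix V V ℝ := fun x y =>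
  if x = y then 1/2 else if G.Adj x y then 1 / (2 * (graphDeg G x : ℝ)) else 0

/-- The generalized lamplighter (wreath product) transition matrix on `(V → W) × V`:
move the lamplighter according to `P` and refresh the lamps at the departure and
arrival vertices independently according to `Q` (a double `Q`-update upon holding). -/
def lamplighter (P : Matrix V V ℝ) (Q : Matrix W W ℝ) :
    Matrix ((V → W) × V) ((V → W) × V) ℝ := fun s s' =>
  if s.2 = s'.2 then
    if ∀ z, z ≠ s.2 → s.1 z = s'.1 z then P s.2 s'.2 * (Q * Q) (s.1 s.2) (s'.1 s.2) else 0
  else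
    if ∀ z, z ≠ s.2 → z ≠ s'.2 → s.1 z = s'.1 z then
      P s.2 s'.2 * Q (s.1 s.2) (s'.1 s.2) * Q (s.1 s'.2) (s'.1 s'.2)
    else 0

/-- The product stationary distribution `π⋄((f,x)) = π_G(x) ∏_v π_H(f_v)`. -/
def lampStat (πG : V → ℝ) (πH : W → ℝ) : ((V → W) × V) → ℝ :=
  fun s => πG s.2 * ∏ v, πH (s.1 v)

/-- The local time `L_v(t) = 2 Σ_{i≤t} 1(X_i = v) - δ_{X_0,v} - δ_{X_t,v}`, i.e. the
number of lamp-moves at `v` along the base path `p` up to time `t`. -/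
def localTime {t : ℕ} (p : Fin (t+1) → V) (v : V) : ℕ :=
  2 * (univ.filter fun i => p i = v).card
    - (if p 0 = v then 1 else 0) - (if p (Fin.last t) = v then 1 else 0)

/-- Truncation (for `s ≤ t`) of a path to the time-interval `[0,s]`. -/
def truncPath {t : ℕ} (p : Fin (t+1) → V) (s : ℕ) : Fin (s+1) → V :=
  fun i => p ⟨min (i : ℕ) t, Nat.lt_succ_of_le (Nat.min_le_right _ _)⟩

/-- Extension of a finite path to all times (constant after time `n`). -/
def extendPath {n : ℕ} (z : Fin (n+1) → W) : ℕ → W :=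
  fun i => z ⟨min i n, Nat.lt_succ_of_le (Nat.min_le_right _ _)⟩

/-- The history (list of states) of the trajectory `z` up to time `k`. -/
def ruleHist (z : ℕ → W) (k : ℕ) : List W := List.ofFn fun i : Fin (k+1) => z (i : ℕ)

/-- A randomized stopping rule: `r h` is the conditional probability of stopping
right now given that the history so far is `h` and we have not yet stopped. -/
def IsStoppingRule (r : List W → ℝ) : Prop := ∀ h, 0 ≤ r h ∧ r h ≤ 1

/-- `P[τ ≤ m | trajectory z]` for the stopping rule `r`. -/
def stopBy (r : List W → ℝ) (z : ℕ → W) (m : ℕ) : ℝ :=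
  1 - ∏ k ∈ Finset.range (m+1), (1 - r (ruleHist z k))

/-- `P[τ < m | trajectory z]` for the stopping rule `r`. -/
def stopLT (r : List W → ℝ) (z : ℕ → W) (m : ℕ) : ℝ :=
  1 - ∏ k ∈ Finset.range m, (1 - r (ruleHist z k))

/-- `P_{w₀}[X_t = y, τ = t]` for the chain `Q` and the stopping rule `r`. -/
def stopAtProb (Q : Matrix W W ℝ) (r : List W → ℝ) (w₀ : W) (t : ℕ) (y : W) : ℝ :=
  ∑ z : Fin (t+1) → W,
    if z (Fin.last t) = y then
      pathWeight Q w₀ z * (∏ k ∈ Finset.range t, (1 - r (ruleHist (extendPath z) k))) *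
        r (ruleHist (extendPath z) t)
    else 0

/-- `P_{w₀}[X_t = y, τ > t]` for the chain `Q` and the stopping rule `r`. -/
def notStopProbAt (Q : Matrix W W ℝ) (r : List W → ℝ) (w₀ : W) (t : ℕ) (y : W) : ℝ :=
  ∑ z : Fin (t+1) → W,
    if z (Fin.last t) = y then
      pathWeight Q w₀ z * ∏ k ∈ Finset.range (t+1), (1 - r (ruleHist (extendPath z) k))
    else 0

/-- `r` is (the stopping rule of) a strong stationary time for `(Q, π)`. -/
def IsSST (Q : Matrix W W ℝ) (π : W → ℝ) (r : List W → ℝ) : Prop :=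
  IsStoppingRule r ∧ ∀ w₀ t y, stopAtProb Q r w₀ t y = π y * ∑ y', stopAtProb Q r w₀ t y'

/-- `h` is a halting state for the stopping rule `r` and initial state `w₀`:
being at `h` at time `t` implies having stopped. -/
def IsHaltingState (Q : Matrix W W ℝ) (r : List W → ℝ) (w₀ h : W) : Prop :=
  ∀ t, notStopProbAt Q r w₀ t h = 0

/-- A separation-optimal strong stationary time: its tail equals the separation
distance for every starting state. -/
def IsSepOptimal (Q : Matrix W W ℝ) (π : W → ℝ) (r : List W → ℝ) : Prop :=
  ∀ w₀ t, sepDist Q π w₀ t = ∑ y, notStopProbAt Q r w₀ t y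

/-! Joint description of the generalized lamplighter chain: a base path `p` on `V`
together with independent `Q`-trajectories `z v` on each lamp coordinate `v`; the lamp
configuration at time `s` reads off each `z v` at the local time `L_v(s)`. -/

/-- Weight of a joint configuration (base path, lamp trajectories). -/
def jointWeight (P : Matrix V V ℝ) (Q : Matrix W W ℝ) (f₀ : V → W) (x₀ : V) {t : ℕ}
    (p : Fin (t+1) → V) (z : V → (Fin (2*t+1) → W)) : ℝ :=
  pathWeight P x₀ p * ∏ v, pathWeight Q (f₀ v) (z v)

/-- The lamp configuration at time `s` along the joint path: `F_s(v) = Z_v(L_v(s))`. -/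
def lampAt {t : ℕ} (p : Fin (t+1) → V) (z : V → (Fin (2*t+1) → W)) (s : ℕ) (v : V) : W :=
  z v ⟨min (localTime (truncPath p s) v) (2*t), Nat.lt_succ_of_le (Nat.min_le_right _ _)⟩

/-- `P_{(f₀,x₀)}[X⋄_t = (f,x), τ⋄ ≤ s]`, where
`τ⋄ = inf{u : ∀ v, τ_H(v) ≤ L_v(u)}` is built from conditionally independent copies
`τ_H(v)` (with stopping rule `r`) on the lamp coordinates. -/
def tauDmdLEProb (P : Matrix V V ℝ) (Q : Matrix W W ℝ) (r : List W → ℝ)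
    (f₀ : V → W) (x₀ : V) (t s : ℕ) (f : V → W) (x : V) : ℝ :=
  ∑ p : Fin (t+1) → V, ∑ z : V → (Fin (2*t+1) → W),
    if p (Fin.last t) = x ∧ ∀ v, lampAt p z t v = f v then
      jointWeight P Q f₀ x₀ p z *
        ∏ v, stopBy r (extendPath (z v)) (localTime (truncPath p s) v)
    else 0

/-- `P_{(f₀,x₀)}[X⋄_t = (f,x), τ⋄ = t]`. -/
def tauDmdEqProb (P : Matrix V V ℝ) (Q : Matrix W W ℝ) (r : List W → ℝ)
    (f₀ : V → W) (x₀ : V) (t : ℕ) (f : V → W) (x : V) : ℝ :=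
  tauDmdLEProb P Q r f₀ x₀ t t f x -
    if t = 0 then 0 else tauDmdLEProb P Q r f₀ x₀ t (t-1) f x

/-- `P_{(f₀,x₀)}[X_t = x, τ⋄ ≤ s]` (base-walk marginal). -/
def tauDmdLEBase (P : Matrix V V ℝ) (Q : Matrix W W ℝ) (r : List W → ℝ)
    (f₀ : V → W) (x₀ : V) (t s : ℕ) (x : V) : ℝ :=
  ∑ p : Fin (t+1) → V, ∑ z : V → (Fin (2*t+1) → W),
    if p (Fin.last t) = x then
      jointWeight P Q f₀ x₀ p z *
        ∏ v, stopBy r (extendPath (z v)) (localTime (truncPath p s) v)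
    else 0

/-- `P_{(f₀,x₀)}[X_t = x, τ⋄ = t]` (base-walk marginal). -/
def tauDmdEqBase (P : Matrix V V ℝ) (Q : Matrix W W ℝ) (r : List W → ℝ)
    (f₀ : V → W) (x₀ : V) (t : ℕ) (x : V) : ℝ :=
  tauDmdLEBase P Q r f₀ x₀ t t x -
    if t = 0 then 0 else tauDmdLEBase P Q r f₀ x₀ t (t-1) x

/-- `P_{(f₀,x₀)}[τ⋄ > t]`. -/
def tauDmdGTProb (P : Matrix V V ℝ) (Q : Matrix W W ℝ) (r : List W → ℝ)
    (f₀ : V → W) (x₀ : V) (t : ℕ) : ℝ :=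
  ∑ p : Fin (t+1) → V, ∑ z : V → (Fin (2*t+1) → W),
    jointWeight P Q f₀ x₀ p z * (1 - ∏ v, stopBy r (extendPath (z v)) (localTime p v))

/-- `P_{(f₀,x₀)}[X⋄_t = (f,x), τ⋄ > t]`. -/
def tauDmdGTProbAt (P : Matrix V V ℝ) (Q : Matrix W W ℝ) (r : List W → ℝ)
    (f₀ : V → W) (x₀ : V) (t : ℕ) (f : V → W) (x : V) : ℝ :=
  ∑ p : Fin (t+1) → V, ∑ z : V → (Fin (2*t+1) → W),
    if p (Fin.last t) = x ∧ ∀ v, lampAt p z t v = f v then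
      jointWeight P Q f₀ x₀ p z * (1 - ∏ v, stopBy r (extendPath (z v)) (localTime p v))
    else 0

/-- `P_{(g,y)}[X⋄_m = (f,x), τ_G = m]`, where the stopping rule `rG` acts on the
base path of the lamplighter chain. -/
def baseStopProb (P : Matrix V V ℝ) (Q : Matrix W W ℝ) (rG : List V → ℝ)
    (g : V → W) (y : V) (m : ℕ) (f : V → W) (x : V) : ℝ :=
  ∑ p : Fin (m+1) → V, ∑ z : V → (Fin (2*m+1) → W),
    if p (Fin.last m) = x ∧ ∀ v, lampAt p z m v = f v then
      jointWeight P Q g y p z *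
        (∏ k ∈ Finset.range m, (1 - rG (ruleHist (extendPath p) k))) *
        rG (ruleHist (extendPath p) m)
    else 0

/-- `P_{(f₀,x₀)}[X⋄_t = (f,x), τ⋄₂ = t]` for `τ⋄₂ = τ⋄ + τ_G(X_{τ⋄})`, where after
`τ⋄` the chain is restarted and run independently of the past. -/
def tauDmd2EqProb (P : Matrix V V ℝ) (Q : Matrix W W ℝ) (r : List W → ℝ) (rG : List V → ℝ)
    (f₀ : V → W) (x₀ : V) (t : ℕ) (f : V → W) (x : V) : ℝ :=
  ∑ s ∈ Finset.range (t+1), ∑ g : V → W, ∑ y : V,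
    tauDmdEqProb P Q r f₀ x₀ s g y * baseStopProb P Q rG g y (t - s) f x

/-- `P_x[τ > t]` for a stopping rule on the chain `P`. -/
def stopGTProb (P : Matrix V V ℝ) (r : List V → ℝ) (x : V) (t : ℕ) : ℝ :=
  ∑ y, notStopProbAt P r x t y

/-- `E_x[τ]` for a stopping rule on the chain `P`. -/
def expStopTime (P : Matrix V V ℝ) (r : List V → ℝ) (x : V) : ℝ :=
  ∑' t : ℕ, stopGTProb P r x t

/-- `P_x[X_τ = y]` for a stopping rule on the chain `P`. -/
def stopRuleDist (P : Matrix V V ℝ) (r : List V → ℝ) (x : V) (y : V) : ℝ :=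
  ∑' t : ℕ, stopAtProb P r x t y

/-- `t_stop`: the worst-case over starting states of the optimal expected duration of a
(randomized) stopping rule whose stopping distribution is the stationary one
(Lovász–Winkler). -/
def tStop (P : Matrix V V ℝ) (π : V → ℝ) : ℝ :=
  ⨆ x : V, sInf {e : ℝ | ∃ r : List V → ℝ, IsStoppingRule r ∧
    (∀ y, stopRuleDist P r x y = π y) ∧ expStopTime P r x = e}

/-- The path `p` visits every vertex by time `t/3`. -/
def coveredByThird {t : ℕ} (p : Fin (t+1) → V) : Prop :=
  ∀ v : V, ∃ i : Fin (t+1), (i : ℝ) ≤ (t : ℝ) / 3 ∧ p i = v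

end MarkovDefs

lemma Fin.take_snoc_eq_take {α : Type*} {m N : ℕ} (h : m ≤ N + 1) (q : Fin (N+1) → α) (a : α) :
    Fin.take m (h.trans N.succ.le_succ) (Fin.snoc q a : Fin (N+1+1) → α) = Fin.take m h q := by
  rw [← Fin.take_init, Fin.init_snoc]

lemma Fintype.sum_fin_succ_pi_eq_sum_snoc {α : Type*} [Fintype α] {N : ℕ}
    (F : (Fin (N+1+1) → α) → ℝ) :
    ∑ z : Fin (N+1+1) → α, F z = ∑ q : Fin (N+1) → α, ∑ a : α, F (Fin.snoc q a) := by
  rw [← (Fin.snocEquiv fun _ => α).sum_comp, Fintype.sum_prod_type, Finset.sum_comm]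
  rfl

section Paths

variable {W : Type*} [DecidableEq W]

lemma pathWeight_snoc (M : Matrix W W ℝ) (w₀ : W) {N : ℕ} (q : Fin (N+1) → W) (a : W) :
    pathWeight M w₀ (Fin.snoc q a) = pathWeight M w₀ q * M (q (Fin.last N)) a := by
  simp only [pathWeight, Fin.prod_univ_castSucc (n := N), Fin.snoc_castSucc, Fin.succ_castSucc,
    Fin.succ_last, Fin.snoc_last]
  rw [show (0 : Fin (N+1+1)) = Fin.castSucc 0 from rfl, Fin.snoc_castSucc]
  ring

variable [Fintype W]

lemma sum_pathWeight_mul_take (M : Matrix W W ℝ) (hM : ∀ x, ∑ y, M x y = 1) (w₀ : W)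
    {m N : ℕ} (h : m ≤ N) (Ψ : (Fin (m+1) → W) → ℝ) :
    ∑ z : Fin (N+1) → W, pathWeight M w₀ z * Ψ (Fin.take (m+1) (by omega) z)
      = ∑ z : Fin (m+1) → W, pathWeight M w₀ z * Ψ z := by
  induction N, h using Nat.le_induction with
  | base => simp
  | succ N hN ih =>
    rw [Fintype.sum_fin_succ_pi_eq_sum_snoc, ← ih]
    refine Finset.sum_congr rfl fun q _ => ?_
    simp only [pathWeight_snoc, Fin.take_snoc_eq_take (m := m + 1) (N := N) (by omega)]
    rw [← Finset.sum_mul, ← Finset.mul_sum, hM, mul_one]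

lemma sum_pathWeight_last_mul_take (M : Matrix W W ℝ) (w₀ : W)
    {m N : ℕ} (h : m ≤ N) (Ψ : (Fin (m+1) → W) → ℝ) (w : W) :
    ∑ z : Fin (N+1) → W,
        (if z (Fin.last N) = w then pathWeight M w₀ z * Ψ (Fin.take (m+1) (by omega) z) else 0)
      = ∑ y : W, (∑ z : Fin (m+1) → W,
          if z (Fin.last m) = y then pathWeight M w₀ z * Ψ z else 0) * (M ^ (N - m)) y w := by
  induction N, h using Nat.le_induction generalizing w with
  | base => simp [Matrix.one_apply]
  | succ N hN ih =>
    calc _ = ∑ q : Fin (N+1) → W,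
          pathWeight M w₀ q * Ψ (Fin.take (m+1) (by omega) q) * M (q (Fin.last N)) w := by
          rw [Fintype.sum_fin_succ_pi_eq_sum_snoc]
          refine Finset.sum_congr rfl fun q _ => ?_
          simp only [Fin.snoc_last, pathWeight_snoc,
            Fin.take_snoc_eq_take (m := m + 1) (N := N) (by omega)]
          rw [Finset.sum_ite_eq']
          simp only [Finset.mem_univ, if_true]
          ring
      _ = ∑ y : W, (∑ q : Fin (N+1) → W, if q (Fin.last N) = y then
            pathWeight M w₀ q * Ψ (Fin.take (m+1) (by omega) q) else 0) * M y w := by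
          simp only [Finset.sum_mul, ite_mul, zero_mul]
          rw [Finset.sum_comm]
          simp
      _ = _ := by
          simp only [ih, Nat.sub_add_comm hN, pow_succ, Matrix.mul_apply, Finset.sum_mul,
            Finset.mul_sum]
          rw [Finset.sum_comm]
          simp only [mul_assoc]

lemma sum_pathWeight_pin_mul_take (M : Matrix W W ℝ) (hM : ∀ x, ∑ y, M x y = 1) (w₀ : W)
    {m n N : ℕ} (hmn : m ≤ n) (hnN : n ≤ N) (Ψ : (Fin (m+1) → W) → ℝ) (w : W) :
    ∑ z : Fin (N+1) → W,
        (if z ⟨n, by omega⟩ = w then pathWeight M w₀ z * Ψ (Fin.take (m+1) (by omega) z) else 0)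
      = ∑ y : W, (∑ z : Fin (m+1) → W,
          if z (Fin.last m) = y then pathWeight M w₀ z * Ψ z else 0) * (M ^ (n - m)) y w := by
  have h := sum_pathWeight_mul_take M hM w₀ hnN
    (fun z => if z (Fin.last n) = w then Ψ (Fin.take (m+1) (by omega) z) else 0)
  simp only [mul_ite, mul_zero] at h
  rw [← sum_pathWeight_last_mul_take M w₀ hmn Ψ w, ← h]
  rfl

lemma sum_pathWeight_pin (M : Matrix W W ℝ) (hM : ∀ x, ∑ y, M x y = 1) (w₀ : W)
    {n N : ℕ} (hnN : n ≤ N) (w : W) :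
    ∑ z : Fin (N+1) → W, (if z ⟨n, by omega⟩ = w then pathWeight M w₀ z else 0)
      = (M ^ n) w₀ w := by
  have h₀ (y : W) : ∑ z : Fin 1 → W, (if z 0 = y then pathWeight M w₀ z else 0)
      = if w₀ = y then 1 else 0 := by
    rw [← (Equiv.funUnique (Fin 1) W).symm.sum_comp]
    simp [pathWeight, eq_comm]
  have h := sum_pathWeight_pin_mul_take M hM w₀ n.zero_le hnN (fun _ => 1) w
  simp only [mul_one, Fin.last_zero, h₀, Nat.sub_zero] at h
  simpa using h

end Paths

section StoppingRules

variable {W : Type*}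

/-- `P[τ = j | trajectory z]` for the stopping rule `r`. -/
def stopAt (r : List W → ℝ) (z : ℕ → W) (j : ℕ) : ℝ :=
  (∏ k ∈ Finset.range j, (1 - r (ruleHist z k))) * r (ruleHist z j)

lemma stopBy_eq_sum_stopAt (r : List W → ℝ) (z : ℕ → W) (m : ℕ) :
    stopBy r z m = ∑ j ∈ Finset.range (m+1), stopAt r z j := by
  induction m with
  | zero => simp [stopBy, stopAt]
  | succ m ih =>
    rw [Finset.sum_range_succ, ← ih]
    simp only [stopBy, stopAt, Finset.prod_range_succ _ (m + 1)]
    ring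

lemma ruleHist_extendPath_take {N n k : ℕ} (h : n + 1 ≤ N + 1) (z : Fin (N+1) → W)
    (hk : k ≤ n) :
    ruleHist (extendPath (Fin.take (n+1) h z)) k = ruleHist (extendPath z) k := by
  simp only [ruleHist, extendPath, Fin.take_apply]
  congr 1
  funext i
  congr 1
  ext
  simp only [Fin.val_castLE]
  omega

lemma stopAt_extendPath_take (r : List W → ℝ) {N n j : ℕ} (h : n + 1 ≤ N + 1)
    (z : Fin (N+1) → W) (hj : j ≤ n) :
    stopAt r (extendPath (Fin.take (n+1) h z)) j = stopAt r (extendPath z) j := by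
  simp only [stopAt, ruleHist_extendPath_take h z hj]
  congr 1
  refine Finset.prod_congr rfl fun k hk => ?_
  rw [ruleHist_extendPath_take h z (by simp at hk; omega)]

variable [Fintype W] [DecidableEq W]

lemma stopAtProb_eq_sum (Q : Matrix W W ℝ) (r : List W → ℝ) (w₀ : W) (j : ℕ) (y : W) :
    stopAtProb Q r w₀ j y = ∑ z : Fin (j+1) → W,
      if z (Fin.last j) = y then pathWeight Q w₀ z * stopAt r (extendPath z) j else 0 := by
  simp only [stopAtProb, stopAt, mul_assoc]

/-- `P_{w₀}[τ ≤ m]`. -/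
def stopByProb (Q : Matrix W W ℝ) (r : List W → ℝ) (w₀ : W) (m : ℕ) : ℝ :=
  ∑ j ∈ Finset.range (m+1), ∑ y, stopAtProb Q r w₀ j y

lemma sum_pathWeight_mul_stopBy {Q : Matrix W W ℝ} (hQ : IsTransitionMatrix Q)
    (r : List W → ℝ) (w₀ : W) {m N : ℕ} (hmN : m ≤ N) :
    ∑ z : Fin (N+1) → W, pathWeight Q w₀ z * stopBy r (extendPath z) m
      = stopByProb Q r w₀ m := by
  simp only [stopBy_eq_sum_stopAt, Finset.mul_sum, stopByProb, stopAtProb_eq_sum]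
  rw [Finset.sum_comm]
  refine Finset.sum_congr rfl fun j hj => ?_
  have hjN : j ≤ N := by simp at hj; omega
  rw [Finset.sum_comm]
  simp only [Finset.sum_ite_eq, Finset.mem_univ, if_true]
  rw [← sum_pathWeight_mul_take Q hQ.2 w₀ hjN (fun z => stopAt r (extendPath z) j)]
  simp only [stopAt_extendPath_take r _ _ le_rfl]

lemma IsStationaryDist.sum_mul_pow_apply {Q : Matrix W W ℝ} {π : W → ℝ}
    (hπ : IsStationaryDist Q π) (k : ℕ) (w : W) :
    ∑ a, π a * (Q ^ k) a w = π w := by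
  induction k generalizing w with
  | zero => simp [Matrix.one_apply]
  | succ k ih =>
    simp only [pow_succ, Matrix.mul_apply, Finset.mul_sum, ← mul_assoc]
    rw [Finset.sum_comm]
    simp only [← Finset.sum_mul, ih, hπ.2.2]

/-- Split according to the value `j ≤ m` of `τ`: at time `j` the chain is `π`-distributed,
and `π` is preserved from time `j` to time `n`. -/
lemma IsSST.sum_pathWeight_pin_mul_stopBy {Q : Matrix W W ℝ} {π : W → ℝ} {r : List W → ℝ}
    (hQ : IsTransitionMatrix Q) (hπ : IsStationaryDist Q π) (hr : IsSST Q π r)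
    (w₀ : W) {m n N : ℕ} (hmn : m ≤ n) (hnN : n ≤ N) (w : W) :
    ∑ z : Fin (N+1) → W,
        (if z ⟨n, by omega⟩ = w then pathWeight Q w₀ z * stopBy r (extendPath z) m else 0)
      = π w * stopByProb Q r w₀ m := by
  simp only [stopBy_eq_sum_stopAt, Finset.mul_sum, Finset.ite_sum_zero]
  rw [Finset.sum_comm, stopByProb, Finset.mul_sum]
  refine Finset.sum_congr rfl fun j hj => ?_
  have hjn : j ≤ n := by simp at hj; omega
  calc _ = ∑ y, stopAtProb Q r w₀ j y * (Q ^ (n - j)) y w := by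
        simp only [stopAtProb_eq_sum]
        rw [← sum_pathWeight_pin_mul_take Q hQ.2 w₀ hjn hnN]
        simp only [stopAt_extendPath_take r _ _ le_rfl]
    _ = ∑ y, π y * (Q ^ (n - j)) y w * ∑ y', stopAtProb Q r w₀ j y' := by
        refine Finset.sum_congr rfl fun y _ => ?_
        rw [hr.2 w₀ j y]
        ring
    _ = _ := by rw [← Finset.sum_mul, hπ.sum_mul_pow_apply]

end StoppingRules

section LocalTime

variable {V : Type*}

lemma truncPath_self {t : ℕ} (p : Fin (t+1) → V) : truncPath p t = p := by
  funext i
  simp only [truncPath, Nat.min_eq_left (Nat.le_of_lt_succ i.isLt)]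

variable [DecidableEq V]

lemma localTime_le {u : ℕ} (q : Fin (u+1) → V) (v : V) : localTime q v ≤ 2 * u := by
  have hcard := Finset.card_filter_le (Finset.univ : Finset (Fin (u+1))) (fun i => q i = v)
  rw [Finset.card_univ, Fintype.card_fin] at hcard
  unfold localTime
  rcases hcard.lt_or_eq with hlt | heq
  · split_ifs <;> omega
  · have hall := Finset.filter_card_eq (s := Finset.univ) (by rw [heq]; simp)
    rw [if_pos (hall 0 (Finset.mem_univ _)), if_pos (hall _ (Finset.mem_univ _)), heq]
    omega

lemma localTime_truncPath_le {u : ℕ} (p : Fin (u+1+1) → V) (v : V) :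
    localTime (truncPath p u) v ≤ localTime p v := by
  have hq : ∀ i : Fin (u+1), truncPath p u i = p i.castSucc := fun i =>
    congrArg p (Fin.ext (Nat.min_eq_left i.isLt.le))
  have hcard : (Finset.univ.filter fun i : Fin (u+1+1) => p i = v).card
      = (Finset.univ.filter fun i : Fin (u+1) => truncPath p u i = v).card
        + (if p (Fin.last (u+1)) = v then 1 else 0) := by
    simp only [Finset.card_filter, Fin.sum_univ_castSucc, hq]
  unfold localTime
  rw [hcard, hq 0, Fin.castSucc_zero]
  split_ifs <;> omega

end LocalTime

lemma Fintype.sum_pi_ite_forall_prod {ι A : Type*} [Fintype ι] [DecidableEq ι] [Fintype A]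
    (P : ι → A → Prop) [∀ i, DecidablePred (P i)] (F : ι → A → ℝ) :
    ∑ z : ι → A, (if ∀ i, P i (z i) then ∏ i, F i (z i) else 0)
      = ∏ i, ∑ a, if P i a then F i a else 0 := by
  rw [Fintype.prod_sum]
  exact Finset.sum_congr rfl fun z _ => Fintype.prod_ite_zero.symm

section Lamplighter

variable {V : Type*} [Fintype V] [DecidableEq V] {W : Type*} [Fintype W] [DecidableEq W]

lemma tauDmdLEProb_eq_sum (P : Matrix V V ℝ) {Q : Matrix W W ℝ} {πH : W → ℝ} {r : List W → ℝ}
    (hQ : IsTransitionMatrix Q) (hπ : IsStationaryDist Q πH) (hr : IsSST Q πH r)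
    (f₀ : V → W) (x₀ : V) {t s : ℕ}
    (hst : ∀ (p : Fin (t+1) → V) (v : V),
      localTime (truncPath p s) v ≤ localTime (truncPath p t) v)
    (g : V → W) (y : V) :
    tauDmdLEProb P Q r f₀ x₀ t s g y = ∑ p : Fin (t+1) → V,
      if p (Fin.last t) = y then
        pathWeight P x₀ p * ∏ v, (πH (g v) * stopByProb Q r (f₀ v) (localTime (truncPath p s) v))
      else 0 := by
  unfold tauDmdLEProb jointWeight lampAt
  refine Finset.sum_congr rfl fun p _ => ?_
  by_cases hp : p (Fin.last t) = y
  · have hlamps : ∀ z : V → Fin (2*t+1) → W,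
        (if p (Fin.last t) = y ∧ ∀ v, z v ⟨min (localTime (truncPath p t) v) (2*t), by omega⟩ = g v
          then pathWeight P x₀ p * (∏ v, pathWeight Q (f₀ v) (z v)) *
            ∏ v, stopBy r (extendPath (z v)) (localTime (truncPath p s) v)
          else 0)
        = pathWeight P x₀ p *
          if ∀ v, z v ⟨min (localTime (truncPath p t) v) (2*t), by omega⟩ = g v then
            ∏ v, pathWeight Q (f₀ v) (z v) *
              stopBy r (extendPath (z v)) (localTime (truncPath p s) v)
          else 0 := by
      intro z
      simp only [hp, true_and, mul_ite, mul_zero, Finset.prod_mul_distrib, mul_assoc]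
    simp only [hlamps, ← Finset.mul_sum, if_pos hp]
    rw [Fintype.sum_pi_ite_forall_prod
      (fun v (a : Fin (2*t+1) → W) => a ⟨min (localTime (truncPath p t) v) (2*t), by omega⟩ = g v)
      (fun v a => pathWeight Q (f₀ v) a * stopBy r (extendPath a) (localTime (truncPath p s) v))]
    congr 1
    refine Finset.prod_congr rfl fun v _ => ?_
    have hle := localTime_le (truncPath p t) v
    exact hr.sum_pathWeight_pin_mul_stopBy hQ hπ (f₀ v) (le_min (hst p v) ((hst p v).trans hle))
      (min_le_right _ _) (g v)
  · simp [hp]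

lemma tauDmdLEBase_eq_sum (P : Matrix V V ℝ) {Q : Matrix W W ℝ} (hQ : IsTransitionMatrix Q)
    (r : List W → ℝ) (f₀ : V → W) (x₀ : V) {t s : ℕ}
    (hst : ∀ (p : Fin (t+1) → V) (v : V),
      localTime (truncPath p s) v ≤ localTime (truncPath p t) v)
    (y : V) :
    tauDmdLEBase P Q r f₀ x₀ t s y = ∑ p : Fin (t+1) → V,
      if p (Fin.last t) = y then
        pathWeight P x₀ p * ∏ v, stopByProb Q r (f₀ v) (localTime (truncPath p s) v)
      else 0 := by
  unfold tauDmdLEBase jointWeight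
  refine Finset.sum_congr rfl fun p _ => ?_
  by_cases hp : p (Fin.last t) = y
  · simp only [if_pos hp, mul_assoc, ← Finset.prod_mul_distrib, ← Finset.mul_sum]
    rw [← Fintype.prod_sum
      (fun v a => pathWeight Q (f₀ v) a * stopBy r (extendPath a) (localTime (truncPath p s) v))]
    congr 1
    refine Finset.prod_congr rfl fun v _ => ?_
    exact sum_pathWeight_mul_stopBy hQ r (f₀ v) ((hst p v).trans (localTime_le _ v))
  · simp [hp]

lemma tauDmdLEProb_eq_prod_mul (P : Matrix V V ℝ) {Q : Matrix W W ℝ} {πH : W → ℝ}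
    {r : List W → ℝ} (hQ : IsTransitionMatrix Q) (hπ : IsStationaryDist Q πH)
    (hr : IsSST Q πH r) (f₀ : V → W) (x₀ : V) {t s : ℕ}
    (hst : ∀ (p : Fin (t+1) → V) (v : V),
      localTime (truncPath p s) v ≤ localTime (truncPath p t) v)
    (g : V → W) (y : V) :
    tauDmdLEProb P Q r f₀ x₀ t s g y = (∏ v, πH (g v)) * tauDmdLEBase P Q r f₀ x₀ t s y := by
  rw [tauDmdLEProb_eq_sum P hQ hπ hr f₀ x₀ hst, tauDmdLEBase_eq_sum P hQ r f₀ x₀ hst,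
    Finset.mul_sum]
  refine Finset.sum_congr rfl fun p _ => ?_
  split_ifs
  · rw [Finset.prod_mul_distrib]
    ring
  · simp

lemma tauDmdEqProb_eq_prod_mul (P : Matrix V V ℝ) {Q : Matrix W W ℝ} {πH : W → ℝ}
    {r : List W → ℝ} (hQ : IsTransitionMatrix Q) (hπ : IsStationaryDist Q πH)
    (hr : IsSST Q πH r) (f₀ : V → W) (x₀ : V) (t : ℕ) (g : V → W) (y : V) :
    tauDmdEqProb P Q r f₀ x₀ t g y = (∏ v, πH (g v)) * tauDmdEqBase P Q r f₀ x₀ t y := by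
  unfold tauDmdEqProb tauDmdEqBase
  rw [tauDmdLEProb_eq_prod_mul P hQ hπ hr f₀ x₀ (fun _ _ => le_rfl)]
  rcases t with _ | u
  · simp
  · have hst (p : Fin (u+1+1) → V) (v : V) :
        localTime (truncPath p (u+1-1)) v ≤ localTime (truncPath p (u+1)) v := by
      rw [truncPath_self]
      exact localTime_truncPath_le p v
    rw [if_neg u.succ_ne_zero, if_neg u.succ_ne_zero,
      tauDmdLEProb_eq_prod_mul P hQ hπ hr f₀ x₀ hst, mul_sub]

lemma baseStopProb_eq_sum (P : Matrix V V ℝ) {Q : Matrix W W ℝ} (hQ : IsTransitionMatrix Q)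
    (rG : List V → ℝ) (g : V → W) (y : V) (m : ℕ) (f : V → W) (x : V) :
    baseStopProb P Q rG g y m f x = ∑ p : Fin (m+1) → V,
      if p (Fin.last m) = x then
        pathWeight P y p * stopAt rG (extendPath p) m *
          ∏ v, (Q ^ min (localTime (truncPath p m) v) (2*m)) (g v) (f v)
      else 0 := by
  unfold baseStopProb jointWeight lampAt
  refine Finset.sum_congr rfl fun p _ => ?_
  by_cases hp : p (Fin.last m) = x
  · have hlamps : ∀ z : V → Fin (2*m+1) → W,
        (if p (Fin.last m) = x ∧ ∀ v, z v ⟨min (localTime (truncPath p m) v) (2*m), by omega⟩ = f v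
          then pathWeight P y p * (∏ v, pathWeight Q (g v) (z v)) *
            (∏ k ∈ Finset.range m, (1 - rG (ruleHist (extendPath p) k))) *
            rG (ruleHist (extendPath p) m)
          else 0)
        = pathWeight P y p * stopAt rG (extendPath p) m *
          if ∀ v, z v ⟨min (localTime (truncPath p m) v) (2*m), by omega⟩ = f v then
            ∏ v, pathWeight Q (g v) (z v)
          else 0 := by
      intro z
      simp only [hp, true_and, mul_ite, mul_zero, stopAt]
      congr 1
      ring
    simp only [hlamps, ← Finset.mul_sum, if_pos hp]
    rw [Fintype.sum_pi_ite_forall_prod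
      (fun v (a : Fin (2*m+1) → W) => a ⟨min (localTime (truncPath p m) v) (2*m), by omega⟩ = f v)
      (fun v a => pathWeight Q (g v) a)]
    congr 1
    exact Finset.prod_congr rfl fun v _ => sum_pathWeight_pin Q hQ.2 (g v) (min_le_right _ _) (f v)
  · simp [hp]

lemma sum_prod_mul_baseStopProb (P : Matrix V V ℝ) {Q : Matrix W W ℝ} {πH : W → ℝ}
    (hQ : IsTransitionMatrix Q) (hπ : IsStationaryDist Q πH)
    (rG : List V → ℝ) (y : V) (m : ℕ) (f : V → W) (x : V) :
    ∑ g : V → W, (∏ v, πH (g v)) * baseStopProb P Q rG g y m f x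
      = (∏ v, πH (f v)) * stopAtProb P rG y m x := by
  simp only [baseStopProb_eq_sum P hQ, stopAtProb_eq_sum, Finset.mul_sum]
  rw [Finset.sum_comm]
  refine Finset.sum_congr rfl fun p _ => ?_
  split_ifs
  · set n := fun v => min (localTime (truncPath p m) v) (2*m)
    have hg : ∀ g : V → W, (∏ v, πH (g v)) *
        (pathWeight P y p * stopAt rG (extendPath p) m * ∏ v, (Q ^ n v) (g v) (f v))
        = pathWeight P y p * stopAt rG (extendPath p) m *
          ∏ v, πH (g v) * (Q ^ n v) (g v) (f v) := fun g => by
      rw [Finset.prod_mul_distrib]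
      ring
    rw [Finset.sum_congr rfl fun g _ => hg g, ← Finset.mul_sum,
      ← Fintype.prod_sum (fun v a => πH a * (Q ^ n v) a (f v))]
    simp only [hπ.sum_mul_pow_apply]
    ring
  · simp

end Lamplighter

lemma sum_unifDist (α : Type*) [Fintype α] [Nonempty α] : ∑ a, unifDist α a = 1 := by
  simp [unifDist]

lemma sum_lampStat {V W : Type*} [Fintype V] [DecidableEq V] [Fintype W] {πG : V → ℝ}
    {πH : W → ℝ} (hπG : ∑ x, πG x = 1) (hπH : ∑ w, πH w = 1) :
    ∑ f : V → W, ∑ x : V, lampStat πG πH (f, x) = 1 := by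
  simp only [lampStat, ← Finset.sum_mul, hπG, one_mul, ← Fintype.prod_sum (fun _ => πH), hπH,
    Finset.prod_const_one]

lemma tauDmd2EqProb_eq_lampStat_mul {V W : Type*} [Fintype V] [DecidableEq V] [Fintype W]
    [DecidableEq W] {P : Matrix V V ℝ} {Q : Matrix W W ℝ} {πG : V → ℝ} {πH : W → ℝ}
    {r : List W → ℝ} {rG : List V → ℝ} (hQ : IsTransitionMatrix Q)
    (hπH : IsStationaryDist Q πH) (hr : IsSST Q πH r) (hrG : IsSST P πG rG)
    (f₀ : V → W) (x₀ : V) (t : ℕ) (f : V → W) (x : V) :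
    tauDmd2EqProb P Q r rG f₀ x₀ t f x = lampStat πG πH (f, x) *
      ∑ s ∈ Finset.range (t+1), ∑ y : V,
        tauDmdEqBase P Q r f₀ x₀ s y * ∑ x', stopAtProb P rG y (t - s) x' := by
  unfold tauDmd2EqProb lampStat
  rw [Finset.mul_sum]
  refine Finset.sum_congr rfl fun s _ => ?_
  rw [Finset.sum_comm, Finset.mul_sum]
  refine Finset.sum_congr rfl fun y _ => ?_
  rw [Finset.sum_congr rfl fun g _ => by rw [tauDmdEqProb_eq_prod_mul P hQ hπH hr, mul_right_comm],
    ← Finset.sum_mul, sum_prod_mul_baseStopProb P hQ hπH, hrG.2]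
  ring

theorem tau_diamond_two_is_SST_general {V W : Type*} [Fintype V] [DecidableEq V] [Nonempty V]
    [Fintype W] [DecidableEq W]
    (G : SimpleGraph V) (Q : Matrix W W ℝ) (πH : W → ℝ)
    (hQ : IsTransitionMatrix Q)
    (hπH : IsStationaryDist Q πH)
    (r : List W → ℝ) (hr : IsSST Q πH r)
    (rG : List V → ℝ) (hrG : IsSST (lazySRW G) (unifDist V) rG)
    (f₀ : V → W) (x₀ : V) :
    ∀ (t : ℕ) (f : V → W) (x : V),
      tauDmd2EqProb (lazySRW G) Q r rG f₀ x₀ t f x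
        = unifDist V x * (∏ v, πH (f v)) *
            ∑ f' : V → W, ∑ x' : V, tauDmd2EqProb (lazySRW G) Q r rG f₀ x₀ t f' x' := by
  intro t f x
  simp only [tauDmd2EqProb_eq_lampStat_mul hQ hπH hr hrG, ← Finset.sum_mul,
    sum_lampStat (sum_unifDist V) hπH.2.1, one_mul]
  rfl

/-- `τ⋄₂ = τ⋄ + τ_G(X_{τ⋄})` is a strong stationary time for the
generalized lamplighter chain:
`P[X⋄_t = (f,x), τ⋄₂ = t] = π_G(x) (∏_v π_H(f_v)) P[τ⋄₂ = t]`. -/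
theorem tau_diamond_two_is_SST {V W : Type*} [Fintype V] [DecidableEq V] [Nonempty V]
    [Fintype W] [DecidableEq W] [Nonempty W]
    (G : SimpleGraph V) (Q : Matrix W W ℝ) (πH : W → ℝ)
    (hGconn : G.Connected) (hGreg : IsRegularGraph G)
    (hQ : IsTransitionMatrix Q) (hQirr : IsIrreducibleMC Q) (hQap : IsAperiodicMC Q)
    (hπH : IsStationaryDist Q πH) (hQrev : IsReversibleMC Q πH)
    (r : List W → ℝ) (hr : IsSST Q πH r)
    (rG : List V → ℝ) (hrG : IsSST (lazySRW G) (unifDist V) rG)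
    (f₀ : V → W) (x₀ : V) :
    ∀ (t : ℕ) (f : V → W) (x : V),
      tauDmd2EqProb (lazySRW G) Q r rG f₀ x₀ t f x
        = unifDist V x * (∏ v, πH (f v)) *
            ∑ f' : V → W, ∑ x' : V, tauDmd2EqProb (lazySRW G) Q r rG f₀ x₀ t f' x' :=
  tau_diamond_two_is_SST_general G Q πH hQ hπH r hr rG hrG f₀ x₀
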